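/- arXiv:2005.02280 — 6 statements merged into one kernel-verified Lean document; each statement's English description precedes it below -/
import Mathlib

section
/- The ranking induced by the generalized row sum converges to the ranking from the normalized scores as ε → 0: if s_i > s_j for two teams i and j, then there exists ε₀ > 0 such that x_i(ε) > x_j(ε) for all 0 < ε < ε₀. -/
/-!
Taking the dot product of `(I + εL) x(ε) = s` with `x(ε)` and using that the Laplacian quadratic
form `vᵀ L v = ½ ∑ M_ab (v_a - v_b)²` is nonnegative gives `|x(ε)|² ≤ x(ε) ⬝ s`, so by
Cauchy–Schwarz `x(ε)` stays bounded by `|s|`. Hence `x(ε) = s - ε L x(ε) → s` as `ε → 0⁺`, and the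
strict inequality `s i > s j` persists for small `ε`.
-/

open Matrix Finset

/-- The Laplacian matrix of the matches matrix `M`:
`L i j = -M i j` for `i ≠ j` and `L i i = ∑_{j ≠ i} M i j`. -/
def lap {n : ℕ} (M : Matrix (Fin n) (Fin n) ℝ) : Matrix (Fin n) (Fin n) ℝ :=
  Matrix.of fun i j => if i = j then ∑ k ∈ Finset.univ.erase i, M i k else -M i j

open Filter Topology

lemma lap_mulVec_apply {n : ℕ} (M : Matrix (Fin n) (Fin n) ℝ) (v : Fin n → ℝ) (i : Fin n) :
    (lap M *ᵥ v) i = ∑ k, M i k * (v i - v k) := by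
  rw [mulVec, dotProduct, ← add_sum_erase _ _ (mem_univ i), ← add_sum_erase _ _ (mem_univ i),
    sub_self, mul_zero, zero_add, sum_congr rfl (g := fun k => -(M i k * v k))]
  · simp only [lap, of_apply, if_pos, sum_neg_distrib, mul_sub, sum_sub_distrib, ← sum_mul]
    ring
  · intro k hk
    simp [lap, (ne_of_mem_erase hk).symm]

lemma two_mul_dotProduct_lap_mulVec {n : ℕ} {M : Matrix (Fin n) (Fin n) ℝ} (hM : M.IsSymm)
    (v : Fin n → ℝ) : 2 * (v ⬝ᵥ lap M *ᵥ v) = ∑ a, ∑ b, M a b * (v a - v b) ^ 2 := by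
  have hexpand : v ⬝ᵥ lap M *ᵥ v = ∑ a, ∑ b, M a b * (v a * (v a - v b)) := by
    simp only [dotProduct, lap_mulVec_apply, mul_sum]
    exact sum_congr rfl fun a _ => sum_congr rfl fun b _ => by ring
  have hswap : v ⬝ᵥ lap M *ᵥ v = ∑ a, ∑ b, M a b * (v b * (v b - v a)) := by
    rw [hexpand, sum_comm]
    simp only [hM.apply]
  rw [two_mul]
  nth_rw 2 [hswap]
  rw [hexpand, ← sum_add_distrib]
  exact sum_congr rfl fun a _ => by rw [← sum_add_distrib]; exact sum_congr rfl fun b _ => by ring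

lemma dotProduct_lap_mulVec_nonneg {n : ℕ} {M : Matrix (Fin n) (Fin n) ℝ} (hM : M.IsSymm)
    (hM₀ : ∀ i j, 0 ≤ M i j) (v : Fin n → ℝ) : 0 ≤ v ⬝ᵥ lap M *ᵥ v := by
  have hsum : 0 ≤ ∑ a, ∑ b, M a b * (v a - v b) ^ 2 :=
    sum_nonneg fun a _ => sum_nonneg fun b _ => mul_nonneg (hM₀ a b) (sq_nonneg _)
  linarith [two_mul_dotProduct_lap_mulVec hM v]

section

variable {ι : Type*} [Fintype ι] [DecidableEq ι] {A : Matrix ι ι ℝ}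

lemma dotProduct_self_le_of_one_add_smul_mulVec_eq (hA : ∀ v, 0 ≤ v ⬝ᵥ A *ᵥ v) {ε : ℝ}
    (hε : 0 ≤ ε) {x s : ι → ℝ} (h : (1 + ε • A) *ᵥ x = s) : x ⬝ᵥ x ≤ s ⬝ᵥ s := by
  have hxs : x ⬝ᵥ x ≤ x ⬝ᵥ s := by
    rw [← h, add_mulVec, one_mulVec, smul_mulVec, dotProduct_add, dotProduct_smul, smul_eq_mul]
    have := hA x
    nlinarith
  have hCS : (x ⬝ᵥ s) ^ 2 ≤ (x ⬝ᵥ x) * (s ⬝ᵥ s) := by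
    simpa [dotProduct, sq] using sum_mul_sq_le_sq_mul_sq univ x s
  have hx : 0 ≤ x ⬝ᵥ x := by simpa using dotProduct_self_star_nonneg x
  have hs : 0 ≤ s ⬝ᵥ s := by simpa using dotProduct_self_star_nonneg s
  nlinarith [mul_le_mul hxs hxs hx (hx.trans hxs)]

lemma norm_le_of_one_add_smul_mulVec_eq (hA : ∀ v, 0 ≤ v ⬝ᵥ A *ᵥ v) {ε : ℝ}
    (hε : 0 ≤ ε) {x s : ι → ℝ} (h : (1 + ε • A) *ᵥ x = s) : ‖x‖ ≤ √(s ⬝ᵥ s) := by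
  refine (pi_norm_le_iff_of_nonneg (Real.sqrt_nonneg _)).2 fun k => Real.abs_le_sqrt ?_
  calc x k ^ 2 ≤ x ⬝ᵥ x := by
        simpa [dotProduct, sq] using single_le_sum (fun l _ => mul_self_nonneg (x l)) (mem_univ k)
    _ ≤ s ⬝ᵥ s := dotProduct_self_le_of_one_add_smul_mulVec_eq hA hε h

lemma tendsto_of_one_add_smul_mulVec_eq (hA : ∀ v, 0 ≤ v ⬝ᵥ A *ᵥ v) {x : ℝ → ι → ℝ}
    {s : ι → ℝ} (hx : ∀ ε, 0 < ε → (1 + ε • A) *ᵥ x ε = s) : Tendsto x (𝓝[>] 0) (𝓝 s) := by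
  let T := LinearMap.toContinuousLinearMap (mulVecLin A)
  have hbdd : IsBoundedUnder (· ≤ ·) (𝓝[>] 0) fun ε => ‖A *ᵥ x ε‖ :=
    isBoundedUnder_of_eventually_le (a := ‖T‖ * √(s ⬝ᵥ s)) <|
      eventually_mem_nhdsWithin.mono fun ε hε => (T.le_opNorm (x ε)).trans <|
        by gcongr; exact norm_le_of_one_add_smul_mulVec_eq hA (le_of_lt hε) (hx ε hε)
  have hsmall : Tendsto (fun ε : ℝ => ε • A *ᵥ x ε) (𝓝[>] 0) (𝓝 0) :=
    (tendsto_nhdsWithin_of_tendsto_nhds tendsto_id).zero_smul_isBoundedUnder_le hbdd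
  have hsub : Tendsto (fun ε => s - ε • A *ᵥ x ε) (𝓝[>] 0) (𝓝 s) := by
    simpa using tendsto_const_nhds.sub hsmall
  refine hsub.congr' (eventually_mem_nhdsWithin.mono fun ε hε => ?_)
  rw [← hx ε hε, add_mulVec, one_mulVec, smul_mulVec, add_sub_cancel_right]

end

theorem grs_ranking_tendsto_score_ranking_general
    (n : ℕ) (M : Matrix (Fin n) (Fin n) ℝ)
    (hsymm : M.IsSymm) (hnonneg : ∀ i j, 0 ≤ M i j)
    (s : Fin n → ℝ) (x : ℝ → (Fin n → ℝ))
    (hx : ∀ ε : ℝ, 0 < ε → (1 + ε • lap M) *ᵥ x ε = s)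
    (i j : Fin n) (hij : s i > s j) :
    ∃ ε₀ : ℝ, 0 < ε₀ ∧ ∀ ε : ℝ, 0 < ε → ε < ε₀ → x ε i > x ε j := by
  have hlim := tendsto_of_one_add_smul_mulVec_eq (dotProduct_lap_mulVec_nonneg hsymm hnonneg) hx
  have hlt : ∀ᶠ ε in 𝓝[>] 0, x ε j < x ε i :=
    (tendsto_pi_nhds.1 hlim j).eventually_lt (tendsto_pi_nhds.1 hlim i) hij
  obtain ⟨ε₀, hε₀, h⟩ := (nhdsGT_basis (0 : ℝ)).eventually_iff.mp hlt
  exact ⟨ε₀, hε₀, fun ε hε hεε₀ => h ⟨hε, hεε₀⟩⟩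

/-- The ranking induced by the generalized row sum converges to the ranking from the
normalized scores as `ε → 0`: if `s i > s j`, then there exists `ε₀ > 0` such that
`x ε i > x ε j` for all `0 < ε < ε₀`. -/
theorem grs_ranking_tendsto_score_ranking
    (n : ℕ) (hn : 1 ≤ n) (M : Matrix (Fin n) (Fin n) ℝ)
    (hsymm : M.IsSymm) (hnonneg : ∀ i j, 0 ≤ M i j) (hdiag : ∀ i, M i i = 0)
    (s : Fin n → ℝ) (x : ℝ → (Fin n → ℝ))
    (hx : ∀ ε : ℝ, 0 < ε → (1 + ε • lap M) *ᵥ x ε = s)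
    (i j : Fin n) (hij : s i > s j) :
    ∃ ε₀ : ℝ, 0 < ε₀ ∧ ∀ ε : ℝ, 0 < ε → ε < ε₀ → x ε i > x ε j :=
  grs_ranking_tendsto_score_ranking_general n M hsymm hnonneg s x hx i j hij
end

section
/- The first-order correction of the generalized row sum rating at ε = 0 is the opponent adjustment −L·s: lim_{ε → 0⁺} (x(ε) − s)/ε = −L·s. -/
open Matrix Finset

/-!
Rewriting `(1 + ε L) x(ε) = s` as `(x(ε) - s) / ε = -L x(ε)` reduces the claim to the continuity
of `x` at `0`, where `x(ε) = (1 + ε L)⁻¹ s` and matrix inversion is continuous at `1`.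
-/

open Filter Topology

namespace Matrix

variable {ι 𝕜 : Type*} [DecidableEq ι] [NormedField 𝕜]

theorem tendsto_one_add_smul (L : Matrix ι ι 𝕜) :
    Tendsto (fun ε : 𝕜 => 1 + ε • L) (𝓝 0) (𝓝 1) := by
  have hcont : Continuous fun ε : 𝕜 => 1 + ε • L :=
    continuous_const.add (continuous_id.smul continuous_const)
  simpa only [zero_smul, add_zero] using hcont.tendsto 0

variable [Fintype ι]

theorem eventually_isUnit_det_one_add_smul (L : Matrix ι ι 𝕜) :
    ∀ᶠ ε in 𝓝 (0 : 𝕜), IsUnit (1 + ε • L).det := by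
  have hdet : Tendsto (fun ε : 𝕜 => (1 + ε • L).det) (𝓝 0) (𝓝 1) := by
    simpa only [Function.comp_def, id, det_one] using
      (continuous_id.matrix_det.tendsto 1).comp (tendsto_one_add_smul L)
  filter_upwards [hdet.eventually_ne one_ne_zero] with ε hε using isUnit_iff_ne_zero.mpr hε

theorem tendsto_inv_one_add_smul (L : Matrix ι ι 𝕜) :
    Tendsto (fun ε : 𝕜 => (1 + ε • L)⁻¹) (𝓝 0) (𝓝 1) := by
  have hinv : ContinuousAt Inv.inv (1 : Matrix ι ι 𝕜) :=
    continuousAt_matrix_inv 1 <| by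
      simpa only [det_one, Ring.inverse_eq_inv'] using continuousAt_inv₀ (one_ne_zero (α := 𝕜))
  simpa only [Function.comp_def, inv_one] using hinv.tendsto.comp (tendsto_one_add_smul L)

theorem tendsto_of_one_add_smul_mulVec_eq {l : Filter 𝕜} (hl : l ≤ 𝓝 0) (L : Matrix ι ι 𝕜)
    {s : ι → 𝕜} {x : 𝕜 → ι → 𝕜} (hx : ∀ᶠ ε in l, (1 + ε • L) *ᵥ x ε = s) :
    Tendsto x l (𝓝 s) := by
  have hlim : Tendsto (fun ε => (1 + ε • L)⁻¹ *ᵥ s) l (𝓝 s) := by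
    have hcont : Continuous fun A : Matrix ι ι 𝕜 => A *ᵥ s :=
      continuous_id.matrix_mulVec continuous_const
    simpa only [Function.comp_def, one_mulVec] using
      (hcont.tendsto 1).comp ((tendsto_inv_one_add_smul L).mono_left hl)
  refine hlim.congr' ?_
  filter_upwards [hx, hl (eventually_isUnit_det_one_add_smul L)] with ε hxε hdet
  rw [← hxε, mulVec_mulVec, nonsing_inv_mul _ hdet, one_mulVec]

theorem inv_smul_sub_eq_neg_mulVec_of_one_add_smul_mulVec_eq {L : Matrix ι ι 𝕜} {ε : 𝕜}
    (hε : ε ≠ 0) {s y : ι → 𝕜} (hy : (1 + ε • L) *ᵥ y = s) :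
    ε⁻¹ • (y - s) = -(L *ᵥ y) := by
  rw [← hy, add_mulVec, one_mulVec, smul_mulVec, sub_add_cancel_left, smul_neg,
    inv_smul_smul₀ hε]

theorem tendsto_inv_smul_sub_of_one_add_smul_mulVec_eq {l : Filter 𝕜} (hl : l ≤ 𝓝[≠] 0)
    (L : Matrix ι ι 𝕜) {s : ι → 𝕜} {x : 𝕜 → ι → 𝕜}
    (hx : ∀ᶠ ε in l, (1 + ε • L) *ᵥ x ε = s) :
    Tendsto (fun ε => ε⁻¹ • (x ε - s)) l (𝓝 (-(L *ᵥ s))) := by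
  have hxlim := tendsto_of_one_add_smul_mulVec_eq (hl.trans nhdsWithin_le_nhds) L hx
  refine (((continuous_const.matrix_mulVec continuous_id).tendsto s).comp hxlim).neg.congr' ?_
  filter_upwards [hx, hl self_mem_nhdsWithin] with ε hxε hε
  exact (inv_smul_sub_eq_neg_mulVec_of_one_add_smul_mulVec_eq hε hxε).symm

end Matrix

theorem grs_first_order_correction_general
    (n : ℕ) (M : Matrix (Fin n) (Fin n) ℝ)
    (s : Fin n → ℝ) (x : ℝ → (Fin n → ℝ))
    (hx : ∀ ε : ℝ, 0 < ε → (1 + ε • lap M) *ᵥ x ε = s) :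
    Filter.Tendsto (fun ε : ℝ => ε⁻¹ • (x ε - s)) (nhdsWithin 0 (Set.Ioi 0))
      (nhds (-(lap M *ᵥ s))) :=
  tendsto_inv_smul_sub_of_one_add_smul_mulVec_eq (nhdsGT_le_nhdsNE 0) (lap M)
    (eventually_nhdsWithin_of_forall hx)

/-- The first-order correction of the generalized row sum rating at `ε = 0` is the
opponent adjustment `-L s`: `lim_{ε → 0⁺} (x(ε) - s)/ε = -L s`. -/
theorem grs_first_order_correction
    (n : ℕ) (hn : 1 ≤ n) (M : Matrix (Fin n) (Fin n) ℝ)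
    (hsymm : M.IsSymm) (hnonneg : ∀ i j, 0 ≤ M i j) (hdiag : ∀ i, M i i = 0)
    (s : Fin n → ℝ) (x : ℝ → (Fin n → ℝ))
    (hx : ∀ ε : ℝ, 0 < ε → (1 + ε • lap M) *ᵥ x ε = s) :
    Filter.Tendsto (fun ε : ℝ => ε⁻¹ • (x ε - s)) (nhdsWithin 0 (Set.Ioi 0))
      (nhds (-(lap M *ᵥ s))) :=
  grs_first_order_correction_general n M s x hx
end

section
/- The generalized row sum converges to the least squares rating as the parameter tends to infinity: if the match graph is connected and Σ_i s_i = 0, then lim_{ε → ∞} ε·x(ε) = q, where q is the unique least squares rating vector. -/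
open Matrix Finset

variable {n : ℕ} {M : Matrix (Fin n) (Fin n) ℝ}

lemma lap_mulVec (hdiag : ∀ i, M i i = 0) (v : Fin n → ℝ) (i : Fin n) :
    (lap M *ᵥ v) i = ∑ j, M i j * (v i - v j) := by
  have h1 : (lap M *ᵥ v) i = ∑ j, lap M i j * v j := rfl
  rw [h1, ← Finset.add_sum_erase _ _ (Finset.mem_univ i),
      ← Finset.add_sum_erase _ (fun j => M i j * (v i - v j)) (Finset.mem_univ i)]
  simp only [lap, Matrix.of_apply, eq_self_iff_true, if_true, Finset.sum_mul]
  rw [sub_self, mul_zero, zero_add, ← Finset.sum_add_distrib]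
  apply Finset.sum_congr rfl
  intro j hj
  rw [if_neg (Finset.ne_of_mem_erase hj).symm]
  ring

lemma lap_colsum (hsymm : M.IsSymm) (j : Fin n) : ∑ i, lap M i j = 0 := by
  rw [← Finset.add_sum_erase _ _ (Finset.mem_univ j)]
  simp only [lap, Matrix.of_apply, eq_self_iff_true, if_true]
  have : ∀ i ∈ Finset.univ.erase j,
      (if i = j then ∑ k ∈ Finset.univ.erase i, M i k else -M i j) = -M j i := by
    intro i hi
    rw [if_neg (Finset.ne_of_mem_erase hi)]
    rw [show M i j = M j i from (Matrix.IsSymm.apply hsymm j i)]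
  rw [Finset.sum_congr rfl this, Finset.sum_neg_distrib, add_neg_eq_zero]

lemma sum_lap_mulVec (hsymm : M.IsSymm) (v : Fin n → ℝ) :
    ∑ i, (lap M *ᵥ v) i = 0 := by
  have : ∑ i, (lap M *ᵥ v) i = ∑ j, (∑ i, lap M i j) * v j := by
    simp only [mulVec, dotProduct, Finset.sum_mul]
    exact Finset.sum_comm
  rw [this]
  simp [lap_colsum hsymm]

lemma quad_eq (hsymm : M.IsSymm) (hdiag : ∀ i, M i i = 0) (v : Fin n → ℝ) :
    2 * (v ⬝ᵥ (lap M *ᵥ v)) = ∑ i, ∑ j, M i j * (v i - v j) ^ 2 := by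
  have hd : v ⬝ᵥ (lap M *ᵥ v) = ∑ i, ∑ j, M i j * (v i * (v i - v j)) := by
    unfold dotProduct
    refine Finset.sum_congr rfl fun i _ => ?_
    rw [lap_mulVec hdiag v i, Finset.mul_sum]
    exact Finset.sum_congr rfl fun j _ => by ring
  have hd2 : v ⬝ᵥ (lap M *ᵥ v) = ∑ i, ∑ j, M i j * (v j * (v j - v i)) := by
    rw [hd, Finset.sum_comm]
    refine Finset.sum_congr rfl fun a _ => Finset.sum_congr rfl fun b _ => ?_
    rw [Matrix.IsSymm.apply hsymm a b]
  calc 2 * (v ⬝ᵥ (lap M *ᵥ v))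
      = (∑ i, ∑ j, M i j * (v i * (v i - v j)))
        + ∑ i, ∑ j, M i j * (v j * (v j - v i)) := by rw [← hd, ← hd2]; ring
    _ = _ := by
        rw [← Finset.sum_add_distrib]
        refine Finset.sum_congr rfl fun i _ => ?_
        rw [← Finset.sum_add_distrib]
        exact Finset.sum_congr rfl fun j _ => by ring

lemma quad_nonneg (hsymm : M.IsSymm) (hnonneg : ∀ i j, 0 ≤ M i j)
    (hdiag : ∀ i, M i i = 0) (v : Fin n → ℝ) : 0 ≤ v ⬝ᵥ (lap M *ᵥ v) := by
  have h := quad_eq hsymm hdiag v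
  nlinarith [Finset.sum_nonneg (fun i (_ : i ∈ Finset.univ) =>
    Finset.sum_nonneg (fun j (_ : j ∈ Finset.univ) =>
      mul_nonneg (hnonneg i j) (sq_nonneg (v i - v j))))]

lemma quad_zero (hn : 1 ≤ n) (hsymm : M.IsSymm) (hnonneg : ∀ i j, 0 ≤ M i j)
    (hdiag : ∀ i, M i i = 0)
    (hconn : ∀ i j : Fin n, Relation.ReflTransGen (fun a b => 0 < M a b) i j)
    (v : Fin n → ℝ) (hv0 : ∑ i, v i = 0)
    (hQ : v ⬝ᵥ (lap M *ᵥ v) = 0) : v = 0 := by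
  have h2 : ∑ i, ∑ j, M i j * (v i - v j) ^ 2 = 0 := by
    rw [← quad_eq hsymm hdiag v, hQ]; ring
  have hterm : ∀ i j : Fin n, M i j * (v i - v j) ^ 2 = 0 := by
    intro i j
    have h3 := (Finset.sum_eq_zero_iff_of_nonneg (fun i (_ : i ∈ Finset.univ) =>
      Finset.sum_nonneg (fun j (_ : j ∈ Finset.univ) =>
        mul_nonneg (hnonneg i j) (sq_nonneg (v i - v j))))).mp h2 i (Finset.mem_univ i)
    exact (Finset.sum_eq_zero_iff_of_nonneg (fun j (_ : j ∈ Finset.univ) =>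
      mul_nonneg (hnonneg i j) (sq_nonneg (v i - v j)))).mp h3 j (Finset.mem_univ j)
  have hrel : ∀ i j : Fin n, 0 < M i j → v i = v j := by
    intro i j h
    have := hterm i j
    rcases mul_eq_zero.mp this with h' | h'
    · exact absurd h' (ne_of_gt h)
    · have hsq : v i - v j = 0 := by nlinarith [sq_nonneg (v i - v j)]
      linarith
  have hconst : ∀ i j : Fin n, v i = v j := by
    intro i j
    induction hconn i j with
    | refl => rfl
    | tail h hr ih => exact ih.trans (hrel _ _ hr)
  set i0 : Fin n := ⟨0, hn⟩
  have hv : ∀ j, v j = v i0 := fun j => hconst j i0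
  have hsum : ∑ i : Fin n, v i = n * v i0 := by
    rw [Finset.sum_congr rfl (fun j _ => hv j)]
    simp [Finset.card_univ]
  have : v i0 = 0 := by
    rw [hsum] at hv0
    have hn' : (n : ℝ) ≠ 0 := Nat.cast_ne_zero.mpr (by omega)
    rcases mul_eq_zero.mp hv0 with h | h
    · exact absurd h hn'
    · exact h
  funext j
  rw [hv j, this]; rfl

lemma dot_self_pos {v : Fin n → ℝ} (hv : v ≠ 0) : 0 < v ⬝ᵥ v := by
  rcases Function.ne_iff.mp hv with ⟨i, hi⟩
  exact Finset.sum_pos' (fun j _ => mul_self_nonneg (v j))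
    ⟨i, Finset.mem_univ i, mul_self_pos.mpr (by simpa using hi)⟩

lemma normalize_spec {v : Fin n → ℝ} (hv0 : ∑ i, v i = 0) (hv : v ≠ 0) :
    ∃ u : Fin n → ℝ, (∑ i, u i = 0 ∧ u ⬝ᵥ u = 1) ∧
      u ⬝ᵥ (lap M *ᵥ u) = (v ⬝ᵥ v)⁻¹ * (v ⬝ᵥ (lap M *ᵥ v)) := by
  have hpos : 0 < v ⬝ᵥ v := dot_self_pos hv
  set r : ℝ := Real.sqrt (v ⬝ᵥ v) with hr
  have hr2 : r * r = v ⬝ᵥ v := Real.mul_self_sqrt hpos.le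
  have hrpos : 0 < r := Real.sqrt_pos.mpr hpos
  refine ⟨r⁻¹ • v, ⟨?_, ?_⟩, ?_⟩
  · have h : ∑ i, (r⁻¹ • v) i = r⁻¹ * ∑ i, v i := by
      rw [Finset.mul_sum]; rfl
    rw [h, hv0, mul_zero]
  · rw [smul_dotProduct, dotProduct_smul, smul_eq_mul, smul_eq_mul,
      ← mul_assoc, ← mul_inv, hr2]
    exact inv_mul_cancel₀ hpos.ne'
  · rw [Matrix.mulVec_smul, smul_dotProduct, dotProduct_smul, smul_eq_mul,
      smul_eq_mul, ← mul_assoc, ← mul_inv, hr2]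

lemma exists_gap (hn : 1 ≤ n) (hsymm : M.IsSymm) (hnonneg : ∀ i j, 0 ≤ M i j)
    (hdiag : ∀ i, M i i = 0)
    (hconn : ∀ i j : Fin n, Relation.ReflTransGen (fun a b => 0 < M a b) i j) :
    ∃ c : ℝ, 0 < c ∧ ∀ v : Fin n → ℝ, ∑ i, v i = 0 →
      c * (v ⬝ᵥ v) ≤ v ⬝ᵥ (lap M *ᵥ v) := by
  set Q : (Fin n → ℝ) → ℝ := fun v => v ⬝ᵥ (lap M *ᵥ v) with hQdef
  have hQcont : Continuous Q := by
    show Continuous fun v : Fin n → ℝ => ∑ i, v i * ∑ j, lap M i j * v j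
    exact continuous_finset_sum _ fun i _ => (continuous_apply i).mul
      (continuous_finset_sum _ fun j _ => continuous_const.mul (continuous_apply j))
  set S : Set (Fin n → ℝ) := {v | ∑ i, v i = 0 ∧ v ⬝ᵥ v = 1} with hSdef
  by_cases hS : S.Nonempty
  · have hSc : IsClosed S := by
      have h1 : IsClosed {v : Fin n → ℝ | ∑ i, v i = 0} :=
        isClosed_eq (continuous_finset_sum _ fun i _ => continuous_apply i) continuous_const
      have h2 : IsClosed {v : Fin n → ℝ | v ⬝ᵥ v = 1} :=
        isClosed_eq (continuous_finset_sum _ fun i _ =>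
          (continuous_apply i).mul (continuous_apply i)) continuous_const
      exact h1.inter h2
    have hSb : Bornology.IsBounded S := by
      apply (Metric.isBounded_closedBall (x := (0 : Fin n → ℝ)) (r := 1)).subset
      intro v hv
      rw [Metric.mem_closedBall, dist_zero_right]
      refine (pi_norm_le_iff_of_nonneg zero_le_one).mpr fun i => ?_
      rw [Real.norm_eq_abs, abs_le_one_iff_mul_self_le_one]
      calc v i * v i ≤ ∑ j, v j * v j :=
            Finset.single_le_sum (fun j _ => mul_self_nonneg (v j)) (Finset.mem_univ i)
        _ = 1 := hv.2
    obtain ⟨v₀, hv₀S, hmin⟩ :=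
      (Metric.isCompact_of_isClosed_isBounded hSc hSb).exists_isMinOn hS hQcont.continuousOn
    have hc : 0 < Q v₀ := by
      rcases (quad_nonneg hsymm hnonneg hdiag v₀).lt_or_eq with h | h
      · exact h
      · exfalso
        have := quad_zero hn hsymm hnonneg hdiag hconn v₀ hv₀S.1 h.symm
        rw [this] at hv₀S
        simpa using hv₀S.2
    refine ⟨Q v₀, hc, fun v hv0 => ?_⟩
    by_cases hvz : v = 0
    · subst hvz; simp [Q]
    · have hpos := dot_self_pos hvz
      obtain ⟨u, huS, huQ⟩ := normalize_spec (M := M) hv0 hvz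
      have h' : Q v₀ ≤ (v ⬝ᵥ v)⁻¹ * (v ⬝ᵥ (lap M *ᵥ v)) :=
        le_of_le_of_eq (hmin huS) huQ
      calc Q v₀ * (v ⬝ᵥ v) ≤ ((v ⬝ᵥ v)⁻¹ * (v ⬝ᵥ (lap M *ᵥ v))) * (v ⬝ᵥ v) :=
            mul_le_mul_of_nonneg_right h' hpos.le
        _ = v ⬝ᵥ (lap M *ᵥ v) := by field_simp
  · refine ⟨1, one_pos, fun v hv0 => ?_⟩
    by_cases hvz : v = 0
    · subst hvz; simp
    · exfalso
      obtain ⟨u, huS, _⟩ := normalize_spec (M := M) hv0 hvz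
      exact hS ⟨u, huS⟩

/-- The generalized row sum converges to the least squares rating as the parameter
tends to infinity: `lim_{ε → ∞} ε • x(ε) = q`. -/
theorem grs_tendsto_least_squares
    (n : ℕ) (hn : 1 ≤ n) (M : Matrix (Fin n) (Fin n) ℝ)
    (hsymm : M.IsSymm) (hnonneg : ∀ i j, 0 ≤ M i j) (hdiag : ∀ i, M i i = 0)
    (hconn : ∀ i j : Fin n, Relation.ReflTransGen (fun a b => 0 < M a b) i j)
    (s : Fin n → ℝ) (hs : ∑ i, s i = 0)
    (x : ℝ → (Fin n → ℝ))
    (hx : ∀ ε : ℝ, 0 < ε → (1 + ε • lap M) *ᵥ x ε = s)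
    (q : Fin n → ℝ) (hq0 : ∑ i, q i = 0) (hq : lap M *ᵥ q = s) :
    Filter.Tendsto (fun ε : ℝ => ε • x ε) Filter.atTop (nhds q) := by
  obtain ⟨c, hc, hgap⟩ := exists_gap hn hsymm hnonneg hdiag hconn
  set Qq : ℝ := q ⬝ᵥ q with hQq
  have hQqnn : 0 ≤ Qq := by
    by_cases h : q = 0
    · subst h; simp [hQq]
    · exact (dot_self_pos h).le
  -- key bound
  have key : ∀ ε : ℝ, 0 < ε → ∀ i : Fin n,
      (ε • x ε - q) i ^ 2 ≤ Qq / (c ^ 2 * ε ^ 2) := by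
    intro ε hε
    set v : Fin n → ℝ := ε • x ε - q with hvdef
    have hexp : x ε + ε • (lap M *ᵥ x ε) = s := by
      rw [← hx ε hε, Matrix.add_mulVec, Matrix.one_mulVec, Matrix.smul_mulVec]
    -- sum of x ε is zero
    have hsumsplit : ∑ i, (x ε + ε • (lap M *ᵥ x ε)) i
        = (∑ i, x ε i) + ε * ∑ i, (lap M *ᵥ x ε) i := by
      rw [Finset.mul_sum, ← Finset.sum_add_distrib]
      rfl
    have hsx : ∑ i, x ε i = 0 := by
      have h1 := congrArg (fun w : Fin n → ℝ => ∑ i, w i) hexp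
      rw [hsumsplit, sum_lap_mulVec hsymm, mul_zero, add_zero] at h1
      rw [h1, hs]
    have hsv : ∑ i, v i = 0 := by
      have h1 : ∑ i, v i = ε * (∑ i, x ε i) - ∑ i, q i := by
        rw [Finset.mul_sum, ← Finset.sum_sub_distrib]
        rfl
      rw [h1, hsx, hq0, mul_zero, sub_zero]
    -- L v = - x ε
    have hLy : lap M *ᵥ (ε • x ε) = s - x ε := by
      rw [Matrix.mulVec_smul]
      have := hexp
      have h2 : ε • (lap M *ᵥ x ε) = s - x ε := by
        rw [← hexp]; abel
      exact h2
    have hLv : lap M *ᵥ v = -x ε := by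
      rw [hvdef, Matrix.mulVec_sub, hLy, hq]
      abel
    -- x ε in terms of v
    have hxv : x ε = ε⁻¹ • (v + q) := by
      rw [hvdef, sub_add_cancel, smul_smul, inv_mul_cancel₀ hε.ne', one_smul]
    -- quadratic bound
    have hquad : c * (v ⬝ᵥ v) ≤ -(ε⁻¹ * (v ⬝ᵥ v + v ⬝ᵥ q)) := by
      have h1 := hgap v hsv
      rw [hLv, hxv] at h1
      calc c * (v ⬝ᵥ v) ≤ v ⬝ᵥ (-(ε⁻¹ • (v + q))) := h1
        _ = -(ε⁻¹ * (v ⬝ᵥ v + v ⬝ᵥ q)) := by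
            rw [dotProduct_neg, dotProduct_smul, smul_eq_mul,
              dotProduct_add]
    -- Cauchy-Schwarz
    have hCS : (v ⬝ᵥ q) ^ 2 ≤ (v ⬝ᵥ v) * Qq := by
      have h1 := Finset.sum_mul_sq_le_sq_mul_sq Finset.univ v q
      have e1 : ∀ w : Fin n → ℝ, ∑ i, w i ^ 2 = w ⬝ᵥ w := by
        intro w; exact Finset.sum_congr rfl fun i _ => sq (w i)
      rw [e1 v, e1 q] at h1
      exact h1
    have hvvnn : 0 ≤ v ⬝ᵥ v :=
      Finset.sum_nonneg fun j _ => mul_self_nonneg (v j)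
    -- main scalar inequality : v ⬝ᵥ v ≤ Qq / (c^2 ε^2)
    have hvv : v ⬝ᵥ v ≤ Qq / (c ^ 2 * ε ^ 2) := by
      set a : ℝ := v ⬝ᵥ v
      set b : ℝ := v ⬝ᵥ q
      have h2 : ε * (c * a) ≤ -(a + b) := by
        have h3 := mul_le_mul_of_nonneg_left hquad hε.le
        have h4 : ε * -(ε⁻¹ * (a + b)) = -(a + b) := by
          field_simp
        linarith [h3, h4.symm.le]
      rw [le_div_iff₀ (by positivity)]
      rcases hvvnn.eq_or_lt with h | h
      · rw [← h]; simpa using hQqnn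
      · have h3 : c * ε * a ≤ -b := by nlinarith
        have h4 : (c * ε * a) ^ 2 ≤ b ^ 2 := by
          have h5 : 0 ≤ c * ε * a := by positivity
          nlinarith
        nlinarith
    intro i
    calc v i ^ 2 = v i * v i := sq (v i)
      _ ≤ v ⬝ᵥ v := Finset.single_le_sum
            (fun j (_ : j ∈ Finset.univ) => mul_self_nonneg (v j)) (Finset.mem_univ i)
      _ ≤ Qq / (c ^ 2 * ε ^ 2) := hvv
  -- conclude
  rw [tendsto_pi_nhds]
  intro i
  have hg : Filter.Tendsto (fun ε : ℝ => Qq / (c ^ 2 * ε ^ 2)) Filter.atTop (nhds 0) := by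
    apply Filter.Tendsto.div_atTop tendsto_const_nhds
    exact (Filter.tendsto_const_mul_atTop_of_pos (by positivity)).mpr
      (Filter.tendsto_pow_atTop two_ne_zero)
  have hsq : Filter.Tendsto (fun ε : ℝ => ((ε • x ε - q) i) ^ 2) Filter.atTop (nhds 0) := by
    apply squeeze_zero' (Filter.Eventually.of_forall fun ε => sq_nonneg _)
      (Filter.eventually_atTop.mpr ⟨1, fun ε hε => key ε (by linarith) i⟩) hg
  have habs : Filter.Tendsto (fun ε : ℝ => |(ε • x ε - q) i|) Filter.atTop (nhds 0) := by
    have := hsq.sqrt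
    rw [Real.sqrt_zero] at this
    simpa [Real.sqrt_sq_eq_abs] using this
  have hzero : Filter.Tendsto (fun ε : ℝ => (ε • x ε - q) i) Filter.atTop (nhds 0) :=
    (tendsto_zero_iff_abs_tendsto_zero _).mpr habs
  have := hzero.add (tendsto_const_nhds (x := q i))
  simpa using this
end

section
/- The generalized row sum is monotone in the scores: for ε > 0 and score vectors s, s' ∈ ℝⁿ with s_i ≤ s'_i for every i, the corresponding generalized row sum rating vectors satisfy x_i(ε; s) ≤ x_i(ε; s') for every i. -/
open Matrix Finset

/-- The generalized row sum is monotone in the scores: if `s ≤ s'` entrywise, then the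
corresponding generalized row sum ratings satisfy `x ≤ x'` entrywise. -/
theorem grs_monotone_in_scores
    (n : ℕ) (hn : 1 ≤ n) (M : Matrix (Fin n) (Fin n) ℝ)
    (hsymm : M.IsSymm) (hnonneg : ∀ i j, 0 ≤ M i j) (hdiag : ∀ i, M i i = 0)
    (ε : ℝ) (hε : 0 < ε) (s s' x x' : Fin n → ℝ)
    (hss' : ∀ i, s i ≤ s' i)
    (hx : (1 + ε • lap M) *ᵥ x = s)
    (hx' : (1 + ε • lap M) *ᵥ x' = s') :
    ∀ i, x i ≤ x' i := by
  set d : Fin n → ℝ := fun j => x' j - x j with hdef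
  obtain ⟨i0, -, hmin⟩ := Finset.exists_min_image (Finset.univ : Finset (Fin n)) d
    ⟨⟨0, hn⟩, Finset.mem_univ _⟩
  have hlin : ((1 + ε • lap M) *ᵥ d) i0 = s' i0 - s i0 := by
    have h1 : d = x' - x := rfl
    rw [h1, Matrix.mulVec_sub, hx, hx']
    rfl
  have hexp : ((1 + ε • lap M) *ᵥ d) i0
      = d i0 + ε * ∑ k ∈ Finset.univ.erase i0, M i0 k * (d i0 - d k) := by
    rw [Matrix.add_mulVec, Matrix.smul_mulVec, Matrix.one_mulVec]
    have hlv : (lap M *ᵥ d) i0 = ∑ k ∈ Finset.univ.erase i0, M i0 k * (d i0 - d k) := by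
      have : (lap M *ᵥ d) i0 = ∑ k, lap M i0 k * d k := rfl
      rw [this, ← Finset.add_sum_erase _ _ (Finset.mem_univ i0)]
      have h1 : lap M i0 i0 = ∑ k ∈ Finset.univ.erase i0, M i0 k := by simp [lap]
      have h2 : ∀ k ∈ Finset.univ.erase i0, lap M i0 k * d k = -(M i0 k) * d k := by
        intro k hk
        simp [lap, (Finset.ne_of_mem_erase hk).symm]
      rw [h1, Finset.sum_congr rfl h2, Finset.sum_mul, ← Finset.sum_add_distrib]
      exact Finset.sum_congr rfl (fun k hk => by ring)
    simp [hlv]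
  have hd0 : 0 ≤ d i0 := by
    have hsum : ∑ k ∈ Finset.univ.erase i0, M i0 k * (d i0 - d k) ≤ 0 :=
      Finset.sum_nonpos fun k _ =>
        mul_nonpos_of_nonneg_of_nonpos (hnonneg i0 k)
          (sub_nonpos.mpr (hmin k (Finset.mem_univ k)))
    have h0 : 0 ≤ s' i0 - s i0 := sub_nonneg.mpr (hss' i0)
    nlinarith [hlin, hexp]
  intro i
  have := hmin i (Finset.mem_univ i)
  have : 0 ≤ d i := le_trans hd0 this
  simpa [hdef, sub_nonneg] using this
end

section
/- Consistency in a complete round-robin tournament: suppose n ≥ 2 and M_{ij} = m > 0 for all i ≠ j (every pair of teams has played exactly m matches), and Σ_i s_i = 0. Then the generalized row sum rating is x(ε) = s / (1 + ε·m·n) for every ε > 0, and the least squares rating is q = s / (m·n). In particular, both methods induce exactly the same ranking as the normalized scores s. -/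
/-!
When every pair plays `m` matches, `L = m (n I - J)` with `J` the all-ones matrix, so `L v = m n v`
on the hyperplane `∑ v = 0`. Both ratings lie in that hyperplane: `q` by assumption, and `x(ε)`
because the column sums of `L` vanish, so `∑ x(ε) = ∑ s = 0`. Hence both equations become scalar
ones, `(1 + ε m n) x(ε) = s` and `m n q = s`, and positive rescalings preserve the ranking.
-/

open Matrix Finset

section UniformMatches

variable {n : ℕ} {M : Matrix (Fin n) (Fin n) ℝ} {m : ℝ}

theorem lap_apply_of_offDiag_eq (hM : ∀ i j, i ≠ j → M i j = m) (i j : Fin n) :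
    lap M i j = (if i = j then m * n else 0) - m := by
  by_cases hij : i = j
  · subst hij
    have hsum : ∑ k ∈ univ.erase i, M i k = ∑ k ∈ univ.erase i, m :=
      sum_congr rfl fun k hk => hM i k (ne_of_mem_erase hk).symm
    have hn : 1 ≤ n := i.pos
    rw [lap, of_apply, if_pos rfl, if_pos rfl, hsum, sum_const, card_erase_of_mem (mem_univ i),
      card_univ, Fintype.card_fin, nsmul_eq_mul, Nat.cast_sub hn]
    ring
  · simp [lap, hij, hM i j hij]

theorem lap_mulVec_apply_of_offDiag_eq (hM : ∀ i j, i ≠ j → M i j = m) (v : Fin n → ℝ)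
    (i : Fin n) : (lap M *ᵥ v) i = m * n * v i - m * ∑ j, v j := by
  simp [mulVec, dotProduct, lap_apply_of_offDiag_eq hM, sub_mul, sum_sub_distrib, mul_sum]

theorem sum_lap_mulVec_of_offDiag_eq (hM : ∀ i j, i ≠ j → M i j = m) (v : Fin n → ℝ) :
    ∑ i, (lap M *ᵥ v) i = 0 := by
  simp only [lap_mulVec_apply_of_offDiag_eq hM, sum_sub_distrib, ← mul_sum, sum_const, card_univ,
    Fintype.card_fin, nsmul_eq_mul]
  ring

theorem lap_mulVec_of_offDiag_eq_of_sum_eq_zero (hM : ∀ i j, i ≠ j → M i j = m)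
    {v : Fin n → ℝ} (hv : ∑ j, v j = 0) : lap M *ᵥ v = (m * n) • v := by
  ext i
  simp [lap_mulVec_apply_of_offDiag_eq hM, hv]

theorem grs_eq_smul_of_offDiag_eq (hM : ∀ i j, i ≠ j → M i j = m) {ε : ℝ}
    (hε : 1 + ε * m * n ≠ 0) {x s : Fin n → ℝ} (hs : ∑ i, s i = 0)
    (hx : (1 + ε • lap M) *ᵥ x = s) : x = (1 + ε * m * n)⁻¹ • s := by
  rw [add_mulVec, one_mulVec, smul_mulVec] at hx
  have hx0 : ∑ i, x i = 0 := by
    simpa [sum_add_distrib, ← mul_sum, sum_lap_mulVec_of_offDiag_eq hM, hs]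
      using congrArg (fun v => ∑ i, v i) hx
  rw [eq_inv_smul_iff₀ hε, ← hx, lap_mulVec_of_offDiag_eq_of_sum_eq_zero hM hx0, smul_smul,
    add_smul, one_smul, mul_assoc]

theorem ls_eq_smul_of_offDiag_eq (hM : ∀ i j, i ≠ j → M i j = m) (hm : m ≠ 0)
    {q s : Fin n → ℝ} (hq0 : ∑ i, q i = 0) (hq : lap M *ᵥ q = s) : q = (m * n)⁻¹ • s := by
  rcases n.eq_zero_or_pos with rfl | hn
  · exact Subsingleton.elim _ _
  rw [eq_inv_smul_iff₀ (by positivity), ← hq, lap_mulVec_of_offDiag_eq_of_sum_eq_zero hM hq0]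

end UniformMatches

theorem smul_apply_lt_smul_apply_iff {ι α : Type*} [Field α] [LinearOrder α]
    [IsStrictOrderedRing α] {c : α} (hc : 0 < c) (s : ι → α) (i j : ι) :
    (c • s) i < (c • s) j ↔ s i < s j := by
  simp only [Pi.smul_apply, smul_eq_mul, mul_lt_mul_iff_right₀ hc]

theorem grs_ls_complete_round_robin_general
    (n : ℕ) (M : Matrix (Fin n) (Fin n) ℝ)
    (m : ℝ) (hm : 0 < m) (hM : ∀ i j : Fin n, i ≠ j → M i j = m)
    (s : Fin n → ℝ) (hs : ∑ i, s i = 0)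
    (x : ℝ → (Fin n → ℝ))
    (hx : ∀ ε : ℝ, 0 < ε → (1 + ε • lap M) *ᵥ x ε = s)
    (q : Fin n → ℝ) (hq0 : ∑ i, q i = 0) (hq : lap M *ᵥ q = s) :
    (∀ ε : ℝ, 0 < ε → x ε = (1 + ε * m * n)⁻¹ • s) ∧
    q = (m * n)⁻¹ • s ∧
    (∀ i j : Fin n, ∀ ε : ℝ, 0 < ε →
      ((x ε i > x ε j ↔ s i > s j) ∧ (q i > q j ↔ s i > s j))) := by
  have hx_eq (ε : ℝ) (hε : 0 < ε) : x ε = (1 + ε * m * n)⁻¹ • s :=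
    grs_eq_smul_of_offDiag_eq hM (by positivity) hs (hx ε hε)
  have hq_eq : q = (m * n)⁻¹ • s := ls_eq_smul_of_offDiag_eq hM hm.ne' hq0 hq
  refine ⟨hx_eq, hq_eq, fun i j ε hε => ⟨?_, ?_⟩⟩
  · rw [hx_eq ε hε]
    exact smul_apply_lt_smul_apply_iff (by positivity) s j i
  · have hn : 0 < n := i.pos
    rw [hq_eq]
    exact smul_apply_lt_smul_apply_iff (by positivity) s j i

/-- Consistency in a complete round-robin tournament: if every pair of distinct teams has
played exactly `m > 0` matches and `∑ s = 0`, then `x(ε) = s / (1 + ε m n)` for every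
`ε > 0` and the least squares rating is `q = s / (m n)`; in particular, both methods
induce exactly the same ranking as the normalized scores `s`. -/
theorem grs_ls_complete_round_robin
    (n : ℕ) (hn : 2 ≤ n) (M : Matrix (Fin n) (Fin n) ℝ)
    (hsymm : M.IsSymm) (hnonneg : ∀ i j, 0 ≤ M i j) (hdiag : ∀ i, M i i = 0)
    (m : ℝ) (hm : 0 < m) (hM : ∀ i j : Fin n, i ≠ j → M i j = m)
    (s : Fin n → ℝ) (hs : ∑ i, s i = 0)
    (x : ℝ → (Fin n → ℝ))
    (hx : ∀ ε : ℝ, 0 < ε → (1 + ε • lap M) *ᵥ x ε = s)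
    (q : Fin n → ℝ) (hq0 : ∑ i, q i = 0) (hq : lap M *ᵥ q = s) :
    (∀ ε : ℝ, 0 < ε → x ε = (1 + ε * m * n)⁻¹ • s) ∧
    q = (m * n)⁻¹ • s ∧
    (∀ i j : Fin n, ∀ ε : ℝ, 0 < ε →
      ((x ε i > x ε j ↔ s i > s j) ∧ (q i > q j ↔ s i > s j))) :=
  grs_ls_complete_round_robin_general n M m hm hM s hs x hx q hq0 hq
end

section
/- Recursive Buchholz iteration: let r > 0 be at least the maximal number of matches played by a team (r ≥ L_{ii} for all i), and define q⁽ᵏ⁾ = (1/r) Σ_{j=0}^{k} (I − L/r)ʲ · s for k ≥ 0, which satisfies the recursion q⁽ᵏ⁾ = q⁽ᵏ⁻¹⁾ + (1/r)(I − L/r)ᵏ·s. Then for every k ≥ 0: (i) L·q⁽ᵏ⁾ = s − (I − L/r)^{k+1}·s, and (ii) Σ_i q⁽ᵏ⁾_i = 0 whenever Σ_i s_i = 0. Consequently, if the sequence q⁽ᵏ⁾ converges to a limit q* and (I − L/r)ᵏ·s → 0, then q* satisfies Σ_i q*_i = 0 and L·q* = s, i.e., q* is a least squares rating vector. -/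
open Matrix Finset

lemma lap_col_sum {n : ℕ} (M : Matrix (Fin n) (Fin n) ℝ) (hsymm : M.IsSymm)
    (j : Fin n) : ∑ i, lap M i j = 0 := by
  rw [← Finset.add_sum_erase _ _ (Finset.mem_univ j)]
  have h1 : lap M j j = ∑ k ∈ Finset.univ.erase j, M j k := by simp [lap]
  have h2 : ∑ i ∈ Finset.univ.erase j, lap M i j
      = ∑ i ∈ Finset.univ.erase j, (-M j i) := by
    apply Finset.sum_congr rfl
    intro i hi
    have hij : i ≠ j := Finset.ne_of_mem_erase hi
    have : M i j = M j i := by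
      have := congrFun (congrFun hsymm j) i
      simpa [Matrix.transpose_apply] using this
    simp [lap, hij, this]
  rw [h1, h2, Finset.sum_neg_distrib]
  ring

lemma lap_mulVec_sum {n : ℕ} (M : Matrix (Fin n) (Fin n) ℝ) (hsymm : M.IsSymm)
    (x : Fin n → ℝ) : ∑ i, (lap M *ᵥ x) i = 0 := by
  simp only [Matrix.mulVec, dotProduct]
  rw [Finset.sum_comm]
  simp only [← Finset.sum_mul]
  simp [lap_col_sum M hsymm]

/-- Recursive Buchholz iteration: for `r > 0` with `r ≥ L i i` for all `i`, the iterates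
`q⁽ᵏ⁾ = (1/r) ∑_{j=0}^{k} (I - L/r)ʲ s` satisfy the recursion
`q⁽ᵏ⁺¹⁾ = q⁽ᵏ⁾ + (1/r) (I - L/r)ᵏ⁺¹ s`, moreover
(i) `L q⁽ᵏ⁾ = s - (I - L/r)^{k+1} s`,
(ii) `∑ᵢ q⁽ᵏ⁾ᵢ = 0` whenever `∑ᵢ sᵢ = 0`, and consequently if `q⁽ᵏ⁾ → q*` and
`(I - L/r)ᵏ s → 0`, then `q*` is a least squares rating vector. -/
theorem recursive_buchholz
    (n : ℕ) (hn : 1 ≤ n) (M : Matrix (Fin n) (Fin n) ℝ)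
    (hsymm : M.IsSymm) (hnonneg : ∀ i j, 0 ≤ M i j) (hdiag : ∀ i, M i i = 0)
    (r : ℝ) (hr : 0 < r) (hrL : ∀ i, lap M i i ≤ r)
    (s : Fin n → ℝ) (qv : ℕ → (Fin n → ℝ))
    (hqv : ∀ k : ℕ,
      qv k = r⁻¹ • ∑ j ∈ Finset.range (k + 1), ((1 - r⁻¹ • lap M) ^ j) *ᵥ s) :
    (∀ k : ℕ, qv (k + 1) = qv k + r⁻¹ • (((1 - r⁻¹ • lap M) ^ (k + 1)) *ᵥ s)) ∧
    (∀ k : ℕ, lap M *ᵥ qv k = s - ((1 - r⁻¹ • lap M) ^ (k + 1)) *ᵥ s) ∧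
    ((∑ i, s i = 0) → ∀ k : ℕ, ∑ i, qv k i = 0) ∧
    ((∑ i, s i = 0) → ∀ qstar : Fin n → ℝ,
      Filter.Tendsto qv Filter.atTop (nhds qstar) →
      Filter.Tendsto (fun k : ℕ => ((1 - r⁻¹ • lap M) ^ k) *ᵥ s)
        Filter.atTop (nhds 0) →
      (∑ i, qstar i = 0 ∧ lap M *ᵥ qstar = s)) := by
  set A : Matrix (Fin n) (Fin n) ℝ := 1 - r⁻¹ • lap M with hA
  have hrne : r ≠ 0 := ne_of_gt hr
  -- (i)
  have part1 : ∀ k : ℕ, qv (k + 1) = qv k + r⁻¹ • ((A ^ (k + 1)) *ᵥ s) := by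
    intro k
    rw [hqv (k + 1), hqv k, Finset.sum_range_succ, smul_add]
  -- (ii)
  have part2 : ∀ k : ℕ, lap M *ᵥ qv k = s - (A ^ (k + 1)) *ᵥ s := by
    intro k
    rw [hqv k]
    have hsum : (∑ j ∈ Finset.range (k + 1), (A ^ j) *ᵥ s)
        = (∑ j ∈ Finset.range (k + 1), A ^ j) *ᵥ s := by
      funext i
      simp only [Finset.sum_apply, Matrix.mulVec, dotProduct,
        Matrix.sum_apply, Finset.sum_mul]
      exact Finset.sum_comm
    rw [hsum, Matrix.mulVec_smul, Matrix.mulVec_mulVec]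
    have hgeom : lap M * ∑ j ∈ Finset.range (k + 1), A ^ j
        = r • (1 - A ^ (k + 1)) := by
      have hL : lap M = r • (1 - A) := by
        rw [hA]; rw [sub_sub_cancel, smul_smul, mul_inv_cancel₀ hrne, one_smul]
      rw [hL, Matrix.smul_mul]
      congr 1
      exact mul_neg_geom_sum A (k + 1)
    rw [hgeom, Matrix.smul_mulVec, smul_smul, inv_mul_cancel₀ hrne,
      one_smul, Matrix.sub_mulVec, Matrix.one_mulVec]
  -- sum preservation under A
  have hAsum : ∀ x : Fin n → ℝ, ∑ i, (A *ᵥ x) i = ∑ i, x i := by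
    intro x
    have : A *ᵥ x = x - r⁻¹ • (lap M *ᵥ x) := by
      rw [hA, Matrix.sub_mulVec, Matrix.one_mulVec, Matrix.smul_mulVec]
    rw [this]
    simp only [Pi.sub_apply, Pi.smul_apply, smul_eq_mul, Finset.sum_sub_distrib,
      ← Finset.mul_sum]
    rw [lap_mulVec_sum M hsymm]
    ring
  have hApow : ∀ k : ℕ, (∑ i, s i = 0) → ∑ i, ((A ^ k) *ᵥ s) i = 0 := by
    intro k hs
    induction k with
    | zero => simpa [Matrix.one_mulVec] using hs
    | succ m ih =>
      have : (A ^ (m + 1)) *ᵥ s = A *ᵥ ((A ^ m) *ᵥ s) := by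
        rw [Matrix.mulVec_mulVec, ← pow_succ']
      rw [this, hAsum]
      exact ih
  -- (iii)
  have part3 : (∑ i, s i = 0) → ∀ k : ℕ, ∑ i, qv k i = 0 := by
    intro hs k
    rw [hqv k]
    simp only [Pi.smul_apply, smul_eq_mul, ← Finset.mul_sum, Finset.sum_apply]
    rw [Finset.sum_comm]
    have : ∑ j ∈ Finset.range (k + 1), ∑ i, ((A ^ j) *ᵥ s) i = 0 := by
      apply Finset.sum_eq_zero
      intro j _
      exact hApow j hs
    rw [this, mul_zero]
  refine ⟨part1, part2, part3, ?_⟩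
  intro hs qstar hq hAp
  constructor
  · -- sum of qstar is 0
    have hcont : Continuous (fun v : Fin n → ℝ => ∑ i, v i) :=
      continuous_finset_sum _ (fun i _ => continuous_apply i)
    have := (hcont.tendsto qstar).comp hq
    have hzero : Filter.Tendsto (fun k => ∑ i, qv k i) Filter.atTop
        (nhds (∑ i, qstar i)) := this
    have hconst : (fun k => ∑ i, qv k i) = fun _ => (0 : ℝ) := by
      funext k; exact part3 hs k
    rw [hconst] at hzero
    exact (tendsto_nhds_unique tendsto_const_nhds hzero).symm
  · -- L qstar = s
    have hLin : Continuous (fun v : Fin n → ℝ => lap M *ᵥ v) :=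
      LinearMap.continuous_of_finiteDimensional (Matrix.mulVecLin (lap M))
    have h1 : Filter.Tendsto (fun k => lap M *ᵥ qv k) Filter.atTop
        (nhds (lap M *ᵥ qstar)) := (hLin.tendsto qstar).comp hq
    have h2 : Filter.Tendsto (fun k => lap M *ᵥ qv k) Filter.atTop (nhds s) := by
      have heq : (fun k => lap M *ᵥ qv k) = fun k => s - (A ^ (k + 1)) *ᵥ s := by
        funext k; exact part2 k
      rw [heq]
      have hshift : Filter.Tendsto (fun k : ℕ => (A ^ (k + 1)) *ᵥ s)
          Filter.atTop (nhds 0) := hAp.comp (Filter.tendsto_add_atTop_nat 1)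
      have := (tendsto_const_nhds (x := s) (f := Filter.atTop (α := ℕ))).sub hshift
      simpa using this
    exact tendsto_nhds_unique h1 h2
end
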